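/- Corollary of the Hankel rank principle: If β = (β_0,...,β_{2k}) ∈ ℝ^{2k+1} has A_β positive semidefinite and singular, β̃ = (β_0,...,β_{2k-2}) and r = rank β̃, then r = rank β = rank A_β(r-1) = rank A_β(r) = ... = rank A_β(k-1) = rank A_{β̃}. -/
import Mathlib


open Matrix

/-- The (k+1)×(k+1) Hankel matrix of a sequence β = (β₀,...,β₂ₖ). -/
def hankel {k : ℕ} (β : Fin (2*k+1) → ℝ) : Matrix (Fin (k+1)) (Fin (k+1)) ℝ :=
  fun i j => β ⟨i.1 + j.1, by have := i.2; have := j.2; omega⟩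

/-- The leading principal (j+1)×(j+1) submatrix A(j) of a (k+1)×(k+1) matrix, j ≤ k. -/
def leadSub {k : ℕ} (A : Matrix (Fin (k+1)) (Fin (k+1)) ℝ) (j : ℕ) (h : j ≤ k) :
    Matrix (Fin (j+1)) (Fin (j+1)) ℝ :=
  A.submatrix (Fin.castLE (by omega)) (Fin.castLE (by omega))

/-- The leading principal r×r submatrix of a (k+1)×(k+1) matrix, r ≤ k+1. -/
def leadSq {k : ℕ} (A : Matrix (Fin (k+1)) (Fin (k+1)) ℝ) (r : ℕ) (h : r ≤ k+1) :
    Matrix (Fin r) (Fin r) ℝ :=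
  A.submatrix (Fin.castLE h) (Fin.castLE h)

/-- The rank of a sequence via its Hankel matrix: k+1 if the matrix is nonsingular, and
otherwise the least index i whose column lies in the span of the preceding columns. -/
noncomputable def hankelRank {k : ℕ} (A : Matrix (Fin (k+1)) (Fin (k+1)) ℝ) : ℕ :=
  if A.det ≠ 0 then k+1
  else sInf {i : ℕ | ∃ h : i < k+1,
    (fun r => A r ⟨i, h⟩) ∈ Submodule.span ℝ
      {c : Fin (k+1) → ℝ | ∃ j : Fin (k+1), j.1 < i ∧ c = fun r => A r j}}

/-- The truncation (β₀,...,β₂₍ₖ₋₁₎) of (β₀,...,β₂ₖ). -/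
def trunc {k : ℕ} (β : Fin (2*k+1) → ℝ) : Fin (2*(k-1)+1) → ℝ :=
  fun i => β ⟨i.1, by have := i.2; omega⟩

open Matrix Submodule

namespace Stmt10Aux

variable {n : ℕ}

/-- The set of "dependent column indices" of a square matrix. -/
def depSet (M : Matrix (Fin (n+1)) (Fin (n+1)) ℝ) : Set ℕ :=
  {i : ℕ | ∃ h : i < n+1,
    (fun r => M r ⟨i, h⟩) ∈ Submodule.span ℝ
      {c : Fin (n+1) → ℝ | ∃ j : Fin (n+1), j.1 < i ∧ c = fun r => M r j}}

theorem dep_iff_ker (M : Matrix (Fin (n+1)) (Fin (n+1)) ℝ) (i : Fin (n+1)) :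
    i.1 ∈ depSet M ↔ ∃ v : Fin (n+1) → ℝ,
      M *ᵥ v = 0 ∧ v i = 1 ∧ ∀ j, i < j → v j = 0 := by
  classical
  set g : Fin (n+1) → (Fin (n+1) → ℝ) :=
    fun j => if j.1 < i.1 then (fun r => M r j) else 0 with hg
  have hgj : ∀ j : Fin (n+1), j.1 < i.1 → g j = fun r => M r j := by
    intro j hj; rw [hg]; exact if_pos hj
  have hgj0 : ∀ j : Fin (n+1), ¬ j.1 < i.1 → g j = 0 := by
    intro j hj; rw [hg]; exact if_neg hj
  have hspan : Submodule.span ℝ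
      {c : Fin (n+1) → ℝ | ∃ j : Fin (n+1), j.1 < i.1 ∧ c = fun r => M r j}
      = Submodule.span ℝ (Set.range g) := by
    apply le_antisymm <;> rw [Submodule.span_le]
    · rintro c ⟨j, hj, rfl⟩
      exact Submodule.subset_span ⟨j, hgj j hj⟩
    · rintro c ⟨j, rfl⟩
      by_cases hj : j.1 < i.1
      · exact Submodule.subset_span ⟨j, hj, hgj j hj⟩
      · rw [hgj0 j hj]
        exact Submodule.zero_mem _
  have key : ∀ (a : Fin (n+1) → ℝ) (r : Fin (n+1)),
      (M *ᵥ (fun j => if j.1 < i.1 then a j else if j = i then 1 else 0)) r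
        = (∑ j, a j • g j) r + M r i := by
    intro a r
    have hterm : ∀ j : Fin (n+1),
        M r j * (if j.1 < i.1 then a j else if j = i then 1 else 0)
          = a j * (g j r) + (if j = i then M r j else 0) := by
      intro j
      by_cases h1 : j.1 < i.1
      · have hne : j ≠ i := fun h => by subst h; exact lt_irrefl _ h1
        rw [if_pos h1, hgj j h1, if_neg hne, mul_comm, add_zero]
      · rw [if_neg h1, hgj0 j h1]
        by_cases h2 : j = i
        · rw [if_pos h2, if_pos h2, h2]
          simp
        · rw [if_neg h2, if_neg h2]
          simp
    simp only [Matrix.mulVec, dotProduct]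
    rw [Finset.sum_congr rfl (fun j _ => hterm j), Finset.sum_add_distrib,
      Finset.sum_ite_eq' Finset.univ i (fun j => M r j), if_pos (Finset.mem_univ i),
      Finset.sum_apply]
    simp [smul_eq_mul]
  constructor
  · rintro ⟨h, hmem⟩
    rw [show (⟨i.1, h⟩ : Fin (n+1)) = i from rfl] at hmem
    rw [hspan, mem_span_range_iff_exists_fun] at hmem
    obtain ⟨c, hc⟩ := hmem
    refine ⟨fun j => if j.1 < i.1 then -c j else if j = i then 1 else 0, ?_, ?_, ?_⟩
    · funext r
      rw [key (fun j => -c j) r]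
      have hneg : (∑ j, (-c j) • g j) = -(∑ j, c j • g j) := by
        rw [← Finset.sum_neg_distrib]
        exact Finset.sum_congr rfl fun j _ => by rw [neg_smul]
      rw [hneg, hc]
      simp
    · simp
    · intro j hj
      have hj' : i.1 < j.1 := hj
      have h1 : ¬ j.1 < i.1 := by omega
      have h2 : j ≠ i := fun h => by subst h; exact lt_irrefl _ hj'
      simp only [if_neg h1, if_neg h2]
  · rintro ⟨v, hv, hvi, htop⟩
    refine ⟨i.2, ?_⟩
    rw [show (⟨i.1, i.2⟩ : Fin (n+1)) = i from rfl]
    rw [hspan, mem_span_range_iff_exists_fun]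
    refine ⟨fun j => -v j, ?_⟩
    have hveq : (fun j : Fin (n+1) =>
        if j.1 < i.1 then v j else if j = i then (1:ℝ) else 0) = v := by
      funext j
      by_cases h1 : j.1 < i.1
      · rw [if_pos h1]
      · rw [if_neg h1]
        by_cases h2 : j = i
        · rw [if_pos h2, h2, hvi]
        · rw [if_neg h2]
          have : i < j := by
            have h3 : i.1 ≠ j.1 := fun h => h2 (Fin.ext h.symm)
            have : i.1 < j.1 := by omega
            exact this
          rw [htop j this]
    have h0 : ∀ r, (0:ℝ) = (∑ j, v j • g j) r + M r i := by
      intro r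
      have hk := key v r
      rw [hveq, hv] at hk
      simpa using hk
    funext r
    rw [Finset.sum_apply]
    have h0r := h0 r
    rw [Finset.sum_apply] at h0r
    have hMr : M r i = -∑ j, (v j • g j) r := by linarith
    rw [hMr, ← Finset.sum_neg_distrib]
    exact Finset.sum_congr rfl fun j _ => by simp

end Stmt10Aux

namespace Stmt10Aux

theorem exists_top {v : Fin (n+1) → ℝ} (hv : v ≠ 0) :
    ∃ t : Fin (n+1), v t ≠ 0 ∧ ∀ j, t < j → v j = 0 := by
  classical
  have hne : (Finset.univ.filter (fun j => v j ≠ 0)).Nonempty := by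
    obtain ⟨j, hj⟩ := Function.ne_iff.mp hv
    exact ⟨j, by simpa using hj⟩
  set t := (Finset.univ.filter (fun j => v j ≠ 0)).max' hne with ht
  refine ⟨t, ?_, ?_⟩
  · have := (Finset.univ.filter (fun j => v j ≠ 0)).max'_mem hne
    simpa using this
  · intro j hj
    by_contra hvj
    have : j ≤ t := Finset.le_max' _ j (by simp [hvj])
    exact absurd hj (not_lt.mpr this)

theorem mem_depSet_of_ker {M : Matrix (Fin (n+1)) (Fin (n+1)) ℝ} {v : Fin (n+1) → ℝ}
    (hv : M *ᵥ v = 0) {t : Fin (n+1)} (hvt : v t ≠ 0)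
    (htop : ∀ j, t < j → v j = 0) : t.1 ∈ depSet M := by
  rw [dep_iff_ker]
  refine ⟨(v t)⁻¹ • v, ?_, ?_, ?_⟩
  · rw [Matrix.mulVec_smul, hv, smul_zero]
  · exact inv_mul_cancel₀ hvt
  · intro j hj
    simp [htop j hj]

theorem det_eq_zero_of_dep {M : Matrix (Fin (n+1)) (Fin (n+1)) ℝ} {i : Fin (n+1)}
    (h : i.1 ∈ depSet M) : M.det = 0 := by
  obtain ⟨v, hv, hvi, -⟩ := (dep_iff_ker M i).mp h
  refine Matrix.exists_mulVec_eq_zero_iff.mp ⟨v, ?_, hv⟩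
  intro h0
  rw [h0] at hvi
  simp at hvi

theorem depSet_nonempty {M : Matrix (Fin (n+1)) (Fin (n+1)) ℝ} (h : M.det = 0) :
    (depSet M).Nonempty := by
  obtain ⟨v, hv0, hv⟩ := Matrix.exists_mulVec_eq_zero_iff.mpr h
  obtain ⟨t, h1, h2⟩ := exists_top hv0
  exact ⟨t.1, mem_depSet_of_ker hv h1 h2⟩

theorem ker_eq_zero_below {M : Matrix (Fin (n+1)) (Fin (n+1)) ℝ} {m : ℕ}
    (hm : ∀ s, s < m → s ∉ depSet M) {v : Fin (n+1) → ℝ}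
    (hv : M *ᵥ v = 0) (hsupp : ∀ j : Fin (n+1), m ≤ j.1 → v j = 0) : v = 0 := by
  by_contra h
  obtain ⟨t, ht0, htop⟩ := exists_top h
  have htm : t.1 < m := by
    by_contra h'
    exact ht0 (hsupp t (le_of_not_gt h'))
  exact hm t.1 htm (mem_depSet_of_ker hv ht0 htop)

theorem col_mem_of_ker {M : Matrix (Fin (n+1)) (Fin (n+1)) ℝ} {v : Fin (n+1) → ℝ}
    (hv : M *ᵥ v = 0) {t : Fin (n+1)} (hvt : v t = 1)
    (htop : ∀ j, t < j → v j = 0) (W : Submodule ℝ (Fin (n+1) → ℝ))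
    (hW : ∀ s : Fin (n+1), s < t → (fun r => M r s) ∈ W) : (fun r => M r t) ∈ W := by
  classical
  have hcol : (fun r => M r t)
      = ∑ s : Fin (n+1), (if s < t then -v s else 0) • (fun r => M r s) := by
    funext r
    have h0 : ∑ s : Fin (n+1), M r s * v s = 0 := by
      have := congrFun hv r
      simpa [Matrix.mulVec, dotProduct] using this
    rw [Finset.sum_apply]
    have hterm : ∀ s : Fin (n+1),
        ((if s < t then -v s else 0) • fun r => M r s) r
          = -(M r s * v s) + (if s = t then M r s else 0) := by
      intro s
      rcases lt_trichotomy s t with h | h | h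
      · have hne : s ≠ t := ne_of_lt h
        simp [if_pos h, if_neg hne, mul_comm]
      · subst h
        simp [lt_irrefl, hvt]
      · have hne : s ≠ t := ne_of_gt h
        simp [if_neg (not_lt_of_gt h), if_neg hne, htop s h]
    rw [Finset.sum_congr rfl (fun s _ => hterm s), Finset.sum_add_distrib,
      Finset.sum_ite_eq' Finset.univ t (fun s => M r s), if_pos (Finset.mem_univ t)]
    have hz : ∑ s : Fin (n+1), -(M r s * v s) = 0 := by
      rw [Finset.sum_neg_distrib, h0, neg_zero]
    rw [hz, zero_add]
  rw [hcol]
  refine Submodule.sum_mem _ fun s _ => ?_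
  by_cases h : s < t
  · rw [if_pos h]
    exact Submodule.smul_mem _ _ (hW s h)
  · rw [if_neg h, zero_smul]
    exact Submodule.zero_mem _

theorem sum_restrict {N r : ℕ} (h : r ≤ N) (G : ℕ → ℝ)
    (hG : ∀ m, r ≤ m → m < N → G m = 0) :
    ∑ m ∈ Finset.range N, G m = ∑ m ∈ Finset.range r, G m :=
  (Finset.sum_subset (Finset.range_subset_range.mpr h)
    (fun x hx hx' => hG x (by simpa using hx') (by simpa using hx))).symm

theorem fin_sum_eq {N : ℕ} (F : Fin N → ℝ) :
    ∑ i : Fin N, F i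
      = ∑ m ∈ Finset.range N, (if h : m < N then F ⟨m, h⟩ else 0) := by
  rw [← Fin.sum_univ_eq_sum_range]
  exact Finset.sum_congr rfl fun i _ => by simp [i.isLt]

theorem fin_sum_restrict {N s : ℕ} (hs : s ≤ N) (F : Fin N → ℝ)
    (hF : ∀ m : Fin N, s ≤ m.1 → F m = 0) :
    ∑ i : Fin N, F i = ∑ p : Fin s, F ⟨p.1, lt_of_lt_of_le p.2 hs⟩ := by
  rw [fin_sum_eq F, sum_restrict hs _ (fun m hm1 hm2 => by
    rw [dif_pos hm2]; exact hF _ hm1)]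
  rw [← Fin.sum_univ_eq_sum_range (fun m => if h : m < N then F ⟨m, h⟩ else 0) s]
  exact Finset.sum_congr rfl fun p _ => by rw [dif_pos (lt_of_lt_of_le p.2 hs)]

end Stmt10Aux

namespace Stmt10Aux

/-- Padding a kernel vector of a leading principal submatrix of a psd matrix
gives a kernel vector of the full matrix. -/
theorem pad_ker {N : ℕ} {M : Matrix (Fin (N+1)) (Fin (N+1)) ℝ} (hpsd : M.PosSemidef)
    {s : ℕ} (hs : s ≤ N+1) {x : Fin s → ℝ}
    (hx : (leadSq M s hs) *ᵥ x = 0) :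
    M *ᵥ (fun m : Fin (N+1) => if h : m.1 < s then x ⟨m.1, h⟩ else 0) = 0 := by
  set v : Fin (N+1) → ℝ := fun m => if h : m.1 < s then x ⟨m.1, h⟩ else 0 with hv
  have key : ∀ m : Fin (N+1), m.1 < s → (M *ᵥ v) m = 0 := by
    intro m hm
    have hrow : (M *ᵥ v) m = ((leadSq M s hs) *ᵥ x) ⟨m.1, hm⟩ := by
      show ∑ p : Fin (N+1), M m p * v p = ∑ p : Fin s, _
      rw [fin_sum_restrict hs (fun p => M m p * v p) (fun p hp => by
        rw [hv]; simp only [dif_neg (not_lt.mpr hp)]; ring)]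
      refine Finset.sum_congr rfl fun p _ => ?_
      rw [hv]
      simp only [dif_pos p.2]
      rfl
    rw [hrow, hx]
    rfl
  have hform : star v ⬝ᵥ (M *ᵥ v) = 0 := by
    rw [show star v = v from rfl]
    refine Finset.sum_eq_zero fun m _ => ?_
    by_cases hm : m.1 < s
    · rw [key m hm, mul_zero]
    · rw [hv]
      simp only [dif_neg hm]
      ring
  exact (hpsd.dotProduct_mulVec_zero_iff v).mp hform

/-- A nonsingular leading principal submatrix bounds the rank from below. -/
theorem le_rank_of_sub {b a : ℕ} (M : Matrix (Fin b) (Fin b) ℝ) (h : a ≤ b)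
    (hdet : (M.submatrix (Fin.castLE h) (Fin.castLE h)).det ≠ 0) : a ≤ M.rank := by
  classical
  set P : Matrix (Fin a) (Fin b) ℝ := (1 : Matrix (Fin b) (Fin b) ℝ).submatrix (Fin.castLE h) id
  set Q : Matrix (Fin b) (Fin a) ℝ := (1 : Matrix (Fin b) (Fin b) ℝ).submatrix id (Fin.castLE h)
  have hfac : M.submatrix (Fin.castLE h) (Fin.castLE h) = P * M * Q := by
    ext i j
    simp [P, Q, Matrix.mul_apply, Matrix.one_apply, Finset.sum_ite_eq, Finset.sum_ite_eq']
  have h1 : (M.submatrix (Fin.castLE h) (Fin.castLE h)).rank = a := by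
    rw [Matrix.rank_of_isUnit _ ((Matrix.isUnit_iff_isUnit_det _).mpr
      (isUnit_iff_ne_zero.mpr hdet)), Fintype.card_fin]
  calc a = (M.submatrix (Fin.castLE h) (Fin.castLE h)).rank := h1.symm
    _ = (P * M * Q).rank := by rw [hfac]
    _ ≤ (P * M).rank := Matrix.rank_mul_le_left _ _
    _ ≤ M.rank := Matrix.rank_mul_le_right _ _

end Stmt10Aux

namespace Stmt10Aux

/-- A kernel vector of a psd Hankel matrix, supported away from the last two entries,
shifts to another kernel vector. -/
theorem shift_ker {k : ℕ} (β : Fin (2*(k+1)+1) → ℝ) (hpsd : (hankel β).PosSemidef)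
    {v : Fin (k+2) → ℝ} (hv : hankel β *ᵥ v = 0)
    (h1 : v ⟨k+1, by omega⟩ = 0) (h2 : v ⟨k, by omega⟩ = 0) :
    hankel β *ᵥ (fun m : Fin (k+2) =>
      if h : 1 ≤ m.1 then v ⟨m.1 - 1, by omega⟩ else 0) = 0 := by
  set A := hankel β with hA
  set w : Fin (k+2) → ℝ := fun m =>
    if h : 1 ≤ m.1 then v ⟨m.1 - 1, by omega⟩ else 0 with hw
  have key : ∀ m : Fin (k+2), m.1 < k+1 → (A *ᵥ w) m = 0 := by
    intro m hm
    have hstep : (A *ᵥ w) m = (A *ᵥ v) ⟨m.1+1, by omega⟩ := by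
      show ∑ p : Fin (k+2), A m p * w p = ∑ p : Fin (k+2), A ⟨m.1+1, by omega⟩ p * v p
      rw [fin_sum_eq (fun p => A m p * w p),
          fin_sum_eq (fun p => A ⟨m.1+1, by omega⟩ p * v p)]
      rw [Finset.sum_range_succ' _ (k+1), Finset.sum_range_succ
        (fun q => if h : q < k+2 then A ⟨m.1+1, by omega⟩ ⟨q, h⟩ * v ⟨q, h⟩ else 0) (k+1)]
      have hlast : (if h : k+1 < k+2 then A ⟨m.1+1, by omega⟩ ⟨k+1, h⟩ * v ⟨k+1, h⟩ else 0)
          = 0 := by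
        rw [dif_pos (by omega : k+1 < k+2)]
        rw [show v ⟨k+1, by omega⟩ = 0 from h1, mul_zero]
      have hzero : (if h : (0:ℕ) < k+2 then A m ⟨0, h⟩ * w ⟨0, h⟩ else 0) = 0 := by
        rw [dif_pos (by omega : (0:ℕ) < k+2)]
        have : w ⟨0, by omega⟩ = 0 := by rw [hw]; simp
        rw [this, mul_zero]
      rw [hlast, hzero, add_zero, add_zero]
      refine Finset.sum_congr rfl fun q hq => ?_
      rw [Finset.mem_range] at hq
      rw [dif_pos (by omega : q+1 < k+2), dif_pos (by omega : q < k+2)]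
      have hwq : w ⟨q+1, by omega⟩ = v ⟨q, by omega⟩ := by
        rw [hw]; simp
      rw [hwq]
      have hAq : A m ⟨q+1, by omega⟩ = A ⟨m.1+1, by omega⟩ ⟨q, by omega⟩ := by
        rw [hA]
        show β ⟨m.1 + (q+1), _⟩ = β ⟨m.1+1+q, _⟩
        exact congrArg β (Fin.ext (show m.1 + (q+1) = m.1 + 1 + q by omega))
      rw [hAq]
    rw [hstep, hv]
    rfl
  have hform : star w ⬝ᵥ (A *ᵥ w) = 0 := by
    rw [show star w = w from rfl]
    refine Finset.sum_eq_zero fun m _ => ?_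
    by_cases hm : m.1 < k+1
    · rw [key m hm, mul_zero]
    · have hm' : m.1 = k+1 := by omega
      have : w m = 0 := by
        rw [hw]
        simp only [dif_pos (by omega : 1 ≤ m.1)]
        have : (⟨m.1 - 1, by omega⟩ : Fin (k+2)) = ⟨k, by omega⟩ :=
          Fin.ext (show m.1 - 1 = k by omega)
        rw [this, h2]
      rw [this, zero_mul]
  exact (hpsd.dotProduct_mulVec_zero_iff w).mp hform

/-- A kernel vector of the Hankel matrix vanishing at the last coordinate restricts to a
kernel vector of the truncated Hankel matrix. -/
theorem restrict_ker {k : ℕ} (β : Fin (2*(k+1)+1) → ℝ)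
    {v : Fin (k+2) → ℝ} (hv : hankel β *ᵥ v = 0) (h1 : v ⟨k+1, by omega⟩ = 0) :
    hankel (trunc β) *ᵥ (fun p : Fin (k+1) => v ⟨p.1, by omega⟩) = 0 := by
  funext m
  have : (hankel (trunc β) *ᵥ (fun p : Fin (k+1) => v ⟨p.1, by omega⟩)) m
      = (hankel β *ᵥ v) ⟨m.1, by omega⟩ := by
    show ∑ p : Fin (k+1), _ = ∑ p : Fin (k+2), hankel β ⟨m.1, by omega⟩ p * v p
    rw [fin_sum_restrict (by omega : k+1 ≤ k+2)
      (fun p : Fin (k+2) => hankel β ⟨m.1, by omega⟩ p * v p) (fun p hp => by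
        have hp1 : v p = 0 := by
          rw [show p = ⟨k+1, by omega⟩ from Fin.ext (show p.1 = k+1 by omega)]
          exact h1
        simp only [hp1, mul_zero])]
    rfl
  rw [this, hv]
  rfl

/-- A kernel vector of the truncated Hankel matrix lifts (by zero padding) to the
full psd Hankel matrix. -/
theorem lift_ker {k : ℕ} (β : Fin (2*(k+1)+1) → ℝ) (hpsd : (hankel β).PosSemidef)
    {x : Fin (k+1) → ℝ} (hx : hankel (trunc β) *ᵥ x = 0) :
    hankel β *ᵥ (fun m : Fin (k+2) => if h : m.1 < k+1 then x ⟨m.1, h⟩ else 0) = 0 := by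
  refine pad_ker hpsd (by omega : k+1 ≤ k+2) ?_
  rw [show leadSq (hankel β) (k+1) (by omega) = hankel (trunc β) from rfl]
  exact hx

end Stmt10Aux
open Submodule Module

/-- Corollary of the Hankel rank principle: for psd singular A_β with r = rank β̃,
r = rank β = rank A_β(j) for all r-1 ≤ j ≤ k-1, and r = rank A_β̃. -/
theorem stmt10 {k : ℕ} (hk : 1 ≤ k) (β : Fin (2*k+1) → ℝ) (hpsd : (hankel β).PosSemidef)
    (hsing : (hankel β).det = 0) (r : ℕ) (hr : r = hankelRank (hankel (trunc β))) :
    r = hankelRank (hankel β) ∧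
    (∀ j, ∀ _h1 : r - 1 ≤ j, ∀ h2 : j ≤ k - 1,
      (leadSub (hankel β) j (by omega)).rank = r) ∧
    (hankel (trunc β)).rank = r := by
  classical
  obtain ⟨k', rfl⟩ : ∃ k', k = k'+1 := ⟨k-1, by omega⟩
  set A := hankel β with hA
  have hrankA : hankelRank A = sInf (Stmt10Aux.depSet A) := by
    unfold hankelRank
    rw [if_neg (not_not.mpr hsing)]
    rfl
  have hSA : (Stmt10Aux.depSet A).Nonempty := Stmt10Aux.depSet_nonempty hsing
  set i₀ := sInf (Stmt10Aux.depSet A) with hi₀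
  have hi₀mem : i₀ ∈ Stmt10Aux.depSet A := Nat.sInf_mem hSA
  have hi₀lt : i₀ < k'+2 := by obtain ⟨h, -⟩ := hi₀mem; exact h
  -- lifting dependencies from the truncated matrix to the full matrix
  have hdep_lift : ∀ i : ℕ, i ∈ Stmt10Aux.depSet (hankel (trunc β)) →
      i ∈ Stmt10Aux.depSet A := by
    intro i hi
    have hilt : i < k'+1 := by obtain ⟨h, -⟩ := hi; exact h
    obtain ⟨x, hx, hx1, hxtop⟩ :=
      (Stmt10Aux.dep_iff_ker (hankel (trunc β)) ⟨i, hilt⟩).mp hi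
    have hlift := Stmt10Aux.lift_ker β hpsd hx
    refine Stmt10Aux.mem_depSet_of_ker hlift (t := ⟨i, by omega⟩) ?_ ?_
    · show (if h : i < k'+1 then x ⟨i, h⟩ else 0) ≠ 0
      rw [dif_pos hilt]
      exact ne_of_eq_of_ne hx1 one_ne_zero
    · intro j hj
      show (if h : j.1 < k'+1 then x ⟨j.1, h⟩ else 0) = 0
      by_cases hjl : j.1 < k'+1
      · rw [dif_pos hjl]
        exact hxtop ⟨j.1, hjl⟩ hj
      · rw [dif_neg hjl]
  -- restricting dependencies from the full matrix to the truncated matrix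
  have hdep_restrict : ∀ i : ℕ, i < k'+1 → i ∈ Stmt10Aux.depSet A →
      i ∈ Stmt10Aux.depSet (hankel (trunc β)) := by
    intro i hilt hi
    obtain ⟨v, hv, hv1, hvtop⟩ := (Stmt10Aux.dep_iff_ker A ⟨i, by omega⟩).mp hi
    have hres := Stmt10Aux.restrict_ker β hv
      (hvtop ⟨k'+1, by omega⟩ (show i < k'+1 from hilt))
    refine Stmt10Aux.mem_depSet_of_ker hres (t := ⟨i, hilt⟩) ?_ ?_
    · exact ne_of_eq_of_ne hv1 one_ne_zero
    · intro j hj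
      exact hvtop ⟨j.1, by omega⟩ hj
  -- r equals the first dependent column index of A
  have hr_eq : r = i₀ := by
    by_cases hdet : (hankel (trunc β)).det = 0
    · have hne : (Stmt10Aux.depSet (hankel (trunc β))).Nonempty :=
        Stmt10Aux.depSet_nonempty hdet
      have hrr : r = sInf (Stmt10Aux.depSet (hankel (trunc β))) := by
        rw [hr]; unfold hankelRank; rw [if_neg (not_not.mpr hdet)]; rfl
      have hmem := Nat.sInf_mem hne
      have hlt : sInf (Stmt10Aux.depSet (hankel (trunc β))) < k'+1 := by
        obtain ⟨h, -⟩ := hmem; exact h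
      have h1 : i₀ ≤ sInf (Stmt10Aux.depSet (hankel (trunc β))) :=
        Nat.sInf_le (hdep_lift _ hmem)
      rcases lt_or_ge i₀ (k'+1) with hcase | hcase
      · have h2 := Nat.sInf_le (hdep_restrict i₀ hcase hi₀mem)
        omega
      · omega
    · have hrr : r = k'+1 := by
        rw [hr]; unfold hankelRank; rw [if_pos hdet]
        omega
      have hno : ¬ i₀ < k'+1 := fun hlt =>
        hdet (Stmt10Aux.det_eq_zero_of_dep (i := ⟨i₀, hlt⟩)
          (hdep_restrict i₀ hlt hi₀mem))
      omega
  -- propagation of the first column relation by shifting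
  have hprop : ∀ s : ℕ, ∀ t : ℕ, ∀ ht : t = i₀ + s, ∀ htk : t ≤ k',
      ∃ v : Fin (k'+2) → ℝ, A *ᵥ v = 0 ∧ v ⟨t, by omega⟩ = 1 ∧
        ∀ j : Fin (k'+2), t < j.1 → v j = 0 := by
    intro s
    induction s with
    | zero =>
      intro t ht htk
      obtain ⟨v, hv, hv1, hvtop⟩ := (Stmt10Aux.dep_iff_ker A ⟨t, by omega⟩).mp
        (by show t ∈ Stmt10Aux.depSet A
            rw [show t = i₀ from by omega]; exact hi₀mem)
      exact ⟨v, hv, hv1, fun j hj => hvtop j hj⟩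
    | succ s IH =>
      intro t ht htk
      obtain ⟨v, hv, hv1, hvtop⟩ := IH (i₀+s) rfl (by omega)
      have h1 : v ⟨k'+1, by omega⟩ = 0 := hvtop _ (show i₀+s < k'+1 by omega)
      have h2 : v ⟨k', by omega⟩ = 0 := hvtop _ (show i₀+s < k' by omega)
      have hshift := Stmt10Aux.shift_ker β hpsd hv h1 h2
      refine ⟨_, hshift, ?_, ?_⟩
      · show (if h : 1 ≤ t then v ⟨t-1, by omega⟩ else 0) = 1
        rw [dif_pos (show 1 ≤ t by omega)]
        rw [show (⟨t-1, by omega⟩ : Fin (k'+2)) = ⟨i₀+s, by omega⟩ from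
          Fin.ext (show t-1 = i₀+s by omega)]
        exact hv1
      · intro j hj
        show (if h : 1 ≤ j.1 then v ⟨j.1-1, by omega⟩ else 0) = 0
        rw [dif_pos (show 1 ≤ j.1 by omega)]
        exact hvtop ⟨j.1-1, by omega⟩ (show i₀+s < j.1-1 by omega)
  -- the span of the first i₀ columns contains all columns up to index k'
  set W : Submodule ℝ (Fin (k'+2) → ℝ) := Submodule.span ℝ
    (Set.range (fun s : Fin i₀ => fun rr => A rr (Fin.castLE (show i₀ ≤ k'+2 by omega) s)))
    with hWdef
  have hcolW : ∀ m : ℕ, ∀ u : Fin (k'+2), u.1 = m → u.1 ≤ k' →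
      (fun rr => A rr u) ∈ W := by
    intro m
    induction m using Nat.strong_induction_on with
    | _ m IH =>
      intro u hum huk
      rcases lt_or_ge u.1 i₀ with hcase | hcase
      · apply Submodule.subset_span
        exact ⟨⟨u.1, hcase⟩, rfl⟩
      · obtain ⟨v, hv, hv1, hvtop⟩ := hprop (u.1 - i₀) u.1 (by omega) huk
        have hv1' : v u = 1 := by
          rw [show u = ⟨u.1, by omega⟩ from Fin.ext rfl]
          exact hv1
        refine Stmt10Aux.col_mem_of_ker hv hv1' (fun j hj => hvtop j hj) W ?_
        intro sIdx hsu
        have hsu' : sIdx.1 < u.1 := hsu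
        exact IH sIdx.1 (by omega) sIdx rfl (by omega)
  -- the leading i₀ × i₀ minor is nonsingular
  have hdetr : (leadSq A i₀ (show i₀ ≤ k'+2 by omega)).det ≠ 0 := by
    intro h0
    obtain ⟨x, hx0, hx⟩ := Matrix.exists_mulVec_eq_zero_iff.mpr h0
    have hpad := Stmt10Aux.pad_ker hpsd (show i₀ ≤ k'+2 by omega) hx
    have hv0 := Stmt10Aux.ker_eq_zero_below
      (fun s hs => by rw [hi₀] at hs; exact Nat.notMem_of_lt_sInf hs) hpad
      (fun j hj => dif_neg (not_lt.mpr hj))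
    apply hx0
    funext p
    have hp := congrFun hv0 ⟨p.1, by omega⟩
    rw [dif_pos p.2] at hp
    simpa using hp
  -- upper bound on the ranks
  have hub : ∀ j : ℕ, ∀ hj : j ≤ k'+1, j ≤ k' → (leadSub A j hj).rank ≤ i₀ := by
    intro j hj hjk
    have hcols : ∀ t : Fin (j+1), (leadSub A j hj)ᵀ t ∈
        Submodule.map (LinearMap.funLeft ℝ ℝ (Fin.castLE (show j+1 ≤ k'+2 by omega))) W := by
      intro t
      exact ⟨(fun rr => A rr (Fin.castLE (show j+1 ≤ k'+2 by omega) t)),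
        hcolW t.1 (Fin.castLE (show j+1 ≤ k'+2 by omega) t) rfl
          (show t.1 ≤ k' by omega), rfl⟩
    rw [Matrix.rank]
    have hrange : LinearMap.range (leadSub A j hj).mulVecLin ≤
        Submodule.map (LinearMap.funLeft ℝ ℝ (Fin.castLE (show j+1 ≤ k'+2 by omega))) W := by
      rw [Matrix.range_mulVecLin, Submodule.span_le]
      rintro c ⟨t, rfl⟩
      exact hcols t
    have hWrank : finrank ℝ W ≤ i₀ := by
      have hWeq : W = LinearMap.range (Matrix.mulVecLin
          (Matrix.of (fun rr (s : Fin i₀) => A rr (Fin.castLE (show i₀ ≤ k'+2 by omega) s)))) := by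
        rw [Matrix.range_mulVecLin]
        rfl
      rw [hWeq]
      exact Matrix.rank_le_width _
    calc finrank ℝ (LinearMap.range (leadSub A j hj).mulVecLin)
        ≤ finrank ℝ (Submodule.map (LinearMap.funLeft ℝ ℝ
            (Fin.castLE (show j+1 ≤ k'+2 by omega))) W) := Submodule.finrank_mono hrange
      _ ≤ finrank ℝ W := Submodule.finrank_map_le _ _
      _ ≤ i₀ := hWrank
  -- the rank equality
  have hrank_eq : ∀ j : ℕ, ∀ hj : j ≤ k'+1, i₀ - 1 ≤ j → j ≤ k' →
      (leadSub A j hj).rank = i₀ := by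
    intro j hj hj1 hjk
    refine le_antisymm (hub j hj hjk) ?_
    have hile : i₀ ≤ j+1 := by omega
    have hdet' : ((leadSub A j hj).submatrix (Fin.castLE hile) (Fin.castLE hile)).det ≠ 0 := by
      rw [show (leadSub A j hj).submatrix (Fin.castLE hile) (Fin.castLE hile)
        = leadSq A i₀ (show i₀ ≤ k'+2 by omega) from rfl]
      exact hdetr
    exact Stmt10Aux.le_rank_of_sub _ hile hdet'
  refine ⟨hr_eq.trans hrankA.symm, ?_, ?_⟩
  · intro j h1 h2
    exact (hrank_eq j (by omega) (by omega) (by omega)).trans hr_eq.symm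
  · exact (hrank_eq k' (by omega) (by omega) (le_refl _)).trans hr_eq.symm
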